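/- Let n, L be positive integers, P, T ∈ ℂ^{n×n} Hermitian, W ∈ ℂ^{L×L} Hermitian, and Q̃, Ỹ ∈ ℂ^{n×L}. If the block matrices [[P, Q̃],[Q̃^H, I_L]] and [[T, Ỹ],[Ỹ^H, W]] are both positive semidefinite, then 2·|Re Tr(Q̃^H Ỹ)| ≤ Tr(P T) + Tr(W). -/

import Mathlib

/-!
The trace of a product of two positive semidefinite matrices is nonnegative: writing `A = Sᴴ S`,
`tr (A B) = tr (S B Sᴴ)`. Applied to the two block matrices, this gives
`0 ≤ Re tr (P T) + 2 Re tr (Q̃ᴴ Ỹ) + Re tr W`. Conjugating the first block matrix by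
`diag (I, -I)` keeps it positive semidefinite and replaces `Q̃` by `-Q̃`, which gives the
inequality with the opposite sign of `Re tr (Q̃ᴴ Ỹ)`.
-/

open Matrix
open scoped ComplexOrder

namespace Matrix

variable {𝕜 m n : Type*} [RCLike 𝕜] [Fintype m] [Fintype n]

open scoped MatrixOrder in
theorem PosSemidef.trace_mul_nonneg [DecidableEq m] {A B : Matrix m m 𝕜}
    (hA : A.PosSemidef) (hB : B.PosSemidef) : 0 ≤ (A * B).trace := by
  obtain ⟨S, rfl⟩ := CStarAlgebra.nonneg_iff_eq_star_mul_self.mp hA.nonneg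
  rw [star_eq_conjTranspose, mul_assoc, trace_mul_comm]
  exact (hB.mul_mul_conjTranspose_same S).trace_nonneg

theorem trace_fromBlocks_mul_fromBlocks {R : Type*} [NonUnitalNonAssocSemiring R]
    (A : Matrix m m R) (B : Matrix m n R) (C : Matrix n m R) (D : Matrix n n R)
    (A' : Matrix m m R) (B' : Matrix m n R) (C' : Matrix n m R) (D' : Matrix n n R) :
    (fromBlocks A B C D * fromBlocks A' B' C' D').trace =
      (A * A').trace + (B * C').trace + ((C * B').trace + (D * D').trace) := by
  simp [fromBlocks_multiply, trace, Fintype.sum_sum_type, Finset.sum_add_distrib]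

theorem PosSemidef.fromBlocks_neg [DecidableEq m] [DecidableEq n]
    {A : Matrix m m 𝕜} {B : Matrix m n 𝕜} {D : Matrix n n 𝕜}
    (h : (fromBlocks A B Bᴴ D).PosSemidef) : (fromBlocks A (-B) (-B)ᴴ D).PosSemidef := by
  simpa [fromBlocks_conjTranspose, fromBlocks_multiply] using
    h.conjTranspose_mul_mul_same (fromBlocks 1 0 0 (-1) : Matrix (m ⊕ n) (m ⊕ n) 𝕜)

theorem PosSemidef.re_trace_mul_fromBlocks_nonneg [DecidableEq m] [DecidableEq n]
    {P T : Matrix m m 𝕜} {Q Y : Matrix m n 𝕜} {D W : Matrix n n 𝕜}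
    (h₁ : (fromBlocks P Q Qᴴ D).PosSemidef) (h₂ : (fromBlocks T Y Yᴴ W).PosSemidef) :
    0 ≤ RCLike.re (P * T).trace + 2 * RCLike.re (Qᴴ * Y).trace + RCLike.re (D * W).trace := by
  have h := (RCLike.nonneg_iff.mp (h₁.trace_mul_nonneg h₂)).1
  have hQY : (Q * Yᴴ).trace = star (Qᴴ * Y).trace := by
    rw [← trace_conjTranspose, conjTranspose_mul, conjTranspose_conjTranspose, trace_mul_comm]
  rw [trace_fromBlocks_mul_fromBlocks, hQY] at h
  simp only [map_add, RCLike.star_def, RCLike.conj_re] at h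
  linarith

end Matrix

theorem stmt10_general (n L : ℕ)
    (P T : Matrix (Fin n) (Fin n) ℂ)
    (W : Matrix (Fin L) (Fin L) ℂ)
    (Qt Yt : Matrix (Fin n) (Fin L) ℂ)
    (h1 : (Matrix.fromBlocks P Qt Qtᴴ (1 : Matrix (Fin L) (Fin L) ℂ)).PosSemidef)
    (h2 : (Matrix.fromBlocks T Yt Ytᴴ W).PosSemidef) :
    2 * |((Qtᴴ * Yt).trace.re)| ≤ (P * T).trace.re + W.trace.re := by
  have hpos := h1.re_trace_mul_fromBlocks_nonneg h2
  have hneg := h1.fromBlocks_neg.re_trace_mul_fromBlocks_nonneg h2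
  simp only [one_mul, conjTranspose_neg, Matrix.neg_mul, trace_neg, Complex.neg_re,
    RCLike.re_to_complex] at hpos hneg
  rcases abs_cases (Qtᴴ * Yt).trace.re with ⟨h, -⟩ | ⟨h, -⟩ <;> linarith

/-- If `[[P, Q̃],[Q̃ᴴ, I_L]] ⪰ 0` and `[[T, Ỹ],[Ỹᴴ, W]] ⪰ 0` with `P, T, W` Hermitian,
then `2·|Re Tr(Q̃ᴴ Ỹ)| ≤ Tr(P T) + Tr(W)`. -/
theorem stmt10 (n L : ℕ) (hn : 0 < n) (hL : 0 < L)
    (P T : Matrix (Fin n) (Fin n) ℂ) (hP : P.IsHermitian) (hT : T.IsHermitian)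
    (W : Matrix (Fin L) (Fin L) ℂ) (hW : W.IsHermitian)
    (Qt Yt : Matrix (Fin n) (Fin L) ℂ)
    (h1 : (Matrix.fromBlocks P Qt Qtᴴ (1 : Matrix (Fin L) (Fin L) ℂ)).PosSemidef)
    (h2 : (Matrix.fromBlocks T Yt Ytᴴ W).PosSemidef) :
    2 * |((Qtᴴ * Yt).trace.re)| ≤ (P * T).trace.re + W.trace.re :=
  stmt10_general n L P T W Qt Yt h1 h2
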